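/- There exists a countable integral ultrametric space PU, all of whose bounded subsets are finite, such that every proper metric space of asymptotic dimension 0 admits a coarse embedding into PU. -/

import Mathlib

/-- `d` is a metric on the set `X`. -/
def IsMetricD {X : Type*} (d : X → X → ℝ) : Prop :=
  (∀ x, d x x = 0) ∧ (∀ x y, d x y = 0 → x = y) ∧ (∀ x y, d x y = d y x) ∧
    (∀ x y z, d x z ≤ d x y + d y z)

/-- the ultrametric (strong triangle) inequality. -/
def IsUltraD {X : Type*} (d : X → X → ℝ) : Prop :=
  ∀ x y z, d x z ≤ max (d x y) (d y z)

/-- There is an `r`-chain joining `a` and `b`. -/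
def ChainD {Y : Type*} (d : Y → Y → ℝ) (r : ℝ) (a b : Y) : Prop :=
  ∃ (k : ℕ) (c : ℕ → Y), c 0 = a ∧ c k = b ∧ ∀ i < k, d (c i) (c (i + 1)) < r

/-- asymptotic dimension 0: chains of uniformly bounded gauge are uniformly bounded. -/
def AsDimZeroD {Y : Type*} (d : Y → Y → ℝ) : Prop :=
  ∀ r > (0 : ℝ), ∃ s > (0 : ℝ), ∀ a b : Y, ChainD d r a b → d a b ≤ s

/-- large scale continuous (uniformly bornologous). -/
def LSCD {X Y : Type*} (dX : X → X → ℝ) (dY : Y → Y → ℝ) (f : X → Y) : Prop :=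
  ∀ R > (0 : ℝ), ∃ s > (0 : ℝ), ∀ x y : X, dX x y ≤ R → dY (f x) (f y) ≤ s

/-- uniformly proper. -/
def UnifProperD {X Y : Type*} (dX : X → X → ℝ) (dY : Y → Y → ℝ) (f : X → Y) : Prop :=
  ∀ R > (0 : ℝ), ∃ s > (0 : ℝ), ∀ x y : X, dY (f x) (f y) ≤ R → dX x y ≤ s

/-- coarsely surjective. -/
def CoarselySurjD {X Y : Type*} (dY : Y → Y → ℝ) (f : X → Y) : Prop :=
  ∃ R > (0 : ℝ), ∀ y : Y, ∃ x : X, dY (f x) y ≤ R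

/-- coarse embedding. -/
def CoarseEmbD {X Y : Type*} (dX : X → X → ℝ) (dY : Y → Y → ℝ) (f : X → Y) : Prop :=
  LSCD dX dY f ∧ UnifProperD dX dY f

/-- coarse equivalence. -/
def CoarseEquivD {X Y : Type*} (dX : X → X → ℝ) (dY : Y → Y → ℝ) (f : X → Y) : Prop :=
  LSCD dX dY f ∧ UnifProperD dX dY f ∧ CoarselySurjD dY f

/-- the induced integral ultrametric `d_f^ul`. -/
noncomputable def dulD {X Y : Type*} (d : Y → Y → ℝ) (f : X → Y) (x y : X) : ℝ :=
  letI := Classical.decEq X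
  if x = y then 0 else
    ((sInf {r : ℕ | 1 ≤ r ∧ ChainD d (r : ℝ) (f x) (f y)} : ℕ) : ℝ)

/-- `d` is a metric on the subset `A`. -/
def IsMetricOnD {X : Type*} (d : X → X → ℝ) (A : Set X) : Prop :=
  (∀ x ∈ A, d x x = 0) ∧ (∀ x ∈ A, ∀ y ∈ A, d x y = 0 → x = y) ∧
    (∀ x ∈ A, ∀ y ∈ A, d x y = d y x) ∧
    (∀ x ∈ A, ∀ y ∈ A, ∀ z ∈ A, d x z ≤ d x y + d y z)

/-- the ultrametric inequality on a subset. -/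
def IsUltraOnD {X : Type*} (d : X → X → ℝ) (A : Set X) : Prop :=
  ∀ x ∈ A, ∀ y ∈ A, ∀ z ∈ A, d x z ≤ max (d x y) (d y z)

/-- every triangle is isosceles. -/
def IsoscelesD {X : Type*} (d : X → X → ℝ) : Prop :=
  ∀ x y z : X, d x y = d y z ∨ d x y = d x z ∨ d y z = d x z

/-- every triangle with vertices in `A` is isosceles. -/
def IsoscelesOnD {X : Type*} (d : X → X → ℝ) (A : Set X) : Prop :=
  ∀ x ∈ A, ∀ y ∈ A, ∀ z ∈ A, d x y = d y z ∨ d x y = d x z ∨ d y z = d x z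

/-- a set is bounded with respect to the distance function `d`. -/
def BoundedD {X : Type*} (d : X → X → ℝ) (A : Set X) : Prop :=
  ∃ C : ℝ, ∀ x ∈ A, ∀ y ∈ A, d x y ≤ C

/-- `d` makes the disjoint union `Σ s, X s` a coarse disjoint union of the family
of metrics `ds`. -/
def IsCoarseDisjointUnion {S : Type*} {X : S → Type*} (ds : ∀ s, X s → X s → ℝ)
    (d : (Σ s, X s) → (Σ s, X s) → ℝ) : Prop :=
  (∀ (s : S) (x y : X s), d ⟨s, x⟩ ⟨s, y⟩ = ds s x y) ∧
    ∀ M > (0 : ℝ), ∃ B : ∀ s, Set (X s),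
      (∀ s, BoundedD (ds s) (B s)) ∧ {s | (B s).Nonempty}.Finite ∧
      ∀ (s t : S) (x : X s) (y : X t), s ≠ t → x ∉ B s → y ∉ B t → d ⟨s, x⟩ ⟨t, y⟩ > M

/-! In an asymptotic-dimension-0 space `Z` the relations "joined by an `(n+1)`-chain" are
equivalence relations, coarsening as `n` grows, whose classes are open and uniformly bounded;
by properness a class of level `n` meets only finitely many classes of any level `r`. Labelling
the classes of each level by natural numbers (the least index of a point of a dense sequence in
the class, so that the class of the base point gets `0`) turns `x` into a finitely supported word
`r ↦ label r x`, which vanishes from the first level `h x` at which `x` joins the base class.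
Placing this word in column `m (h x)` of `PU`, for a strictly increasing `m` dominating the
finitely many labels that occur, gives a map `e` such that `d (e x) (e y) ≤ n` puts `x` and `y`
in a common class of level `n`, while a common class of level `n` gives `d (e x) (e y) ≤ m n`.
As chain classes are uniformly bounded, this makes `e` a coarse embedding. -/

open Finset

/-- Bounding positions and letters by the column makes every column finite. -/
@[ext]
structure PU where
  col : ℕ
  word : ℕ →₀ ℕ
  lt_col : ∀ r, word r ≠ 0 → r < col ∧ word r < col

namespace PU

instance : Countable PU :=
  Function.Injective.countable (f := fun x : PU => (x.col, x.word)) fun x y h => by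
    simp only [Prod.mk.injEq] at h
    exact PU.ext h.1 h.2

def wordDist (v w : ℕ →₀ ℕ) : ℕ := (v.neLocus w).sup (· + 1)

theorem wordDist_le_iff {v w : ℕ →₀ ℕ} {n : ℕ} : wordDist v w ≤ n ↔ ∀ r, v r ≠ w r → r < n := by
  simp only [wordDist, Finset.sup_le_iff, Finsupp.mem_neLocus, Nat.add_one_le_iff]

theorem lt_wordDist {v w : ℕ →₀ ℕ} {r : ℕ} (h : v r ≠ w r) : r < wordDist v w :=
  wordDist_le_iff.1 le_rfl r h

theorem wordDist_comm (v w : ℕ →₀ ℕ) : wordDist v w = wordDist w v := by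
  rw [wordDist, Finsupp.neLocus_comm, wordDist]

theorem wordDist_eq_zero_iff {v w : ℕ →₀ ℕ} : wordDist v w = 0 ↔ v = w := by
  simp only [← Nat.le_zero, wordDist_le_iff, Nat.not_lt_zero, imp_false, not_not,
    Finsupp.ext_iff]

theorem wordDist_le_max (u v w : ℕ →₀ ℕ) : wordDist u w ≤ max (wordDist u v) (wordDist v w) :=
  wordDist_le_iff.2 fun r hr => by
    by_cases h : u r = v r
    · exact lt_max_of_lt_right (lt_wordDist (h ▸ hr))
    · exact lt_max_of_lt_left (lt_wordDist h)

theorem wordDist_le_col {x y : PU} (h : x.col = y.col) : wordDist x.word y.word ≤ x.col :=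
  wordDist_le_iff.2 fun r hr => by
    by_cases hx : x.word r = 0
    · exact h ▸ (y.lt_col r (hx ▸ hr.symm)).1
    · exact (x.lt_col r hx).1

def natDist (x y : PU) : ℕ :=
  if x.col = y.col then wordDist x.word y.word else max x.col y.col

theorem natDist_eq_zero_iff {x y : PU} : natDist x y = 0 ↔ x = y := by
  unfold natDist
  split_ifs with h
  · rw [wordDist_eq_zero_iff, PU.ext_iff]
    exact ⟨fun hw => ⟨h, hw⟩, fun hxy => hxy.2⟩
  · exact ⟨fun h0 => absurd (by omega) h, fun hxy => absurd (congrArg col hxy) h⟩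

theorem natDist_comm (x y : PU) : natDist x y = natDist y x := by
  unfold natDist
  split_ifs <;> first | omega | rw [wordDist_comm]

theorem natDist_le_max (x y z : PU) : natDist x z ≤ max (natDist x y) (natDist y z) := by
  have := wordDist_le_max x.word y.word z.word
  have := @wordDist_le_col x z
  unfold natDist
  split_ifs <;> omega

theorem col_le_max_natDist (x y : PU) : y.col ≤ max x.col (natDist x y) := by
  unfold natDist
  split_ifs <;> omega

theorem isMetricD_natDist : IsMetricD fun x y : PU => (natDist x y : ℝ) := by
  refine ⟨fun x => ?_, fun x y h => ?_, fun x y => ?_, fun x y z => ?_⟩ <;> dsimp only at *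
  · exact_mod_cast natDist_eq_zero_iff.2 rfl
  · exact natDist_eq_zero_iff.1 (by exact_mod_cast h)
  · rw [natDist_comm]
  · have := natDist_le_max x y z
    exact_mod_cast (by omega : natDist x z ≤ natDist x y + natDist y z)

theorem isUltraD_natDist : IsUltraD fun x y : PU => (natDist x y : ℝ) := fun x y z => by
  dsimp only
  exact_mod_cast natDist_le_max x y z

theorem finite_setOf_col_le (M : ℕ) : {x : PU | x.col ≤ M}.Finite := by
  let g : ℕ →₀ ℕ := Finsupp.indicator (range M) fun _ _ => M
  have hword : ∀ x : PU, x.col ≤ M → x.word ≤ g := fun x hx r => by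
    by_cases h : x.word r = 0
    · exact h ▸ Nat.zero_le _
    · have := x.lt_col r h
      simp only [g, Finsupp.indicator_apply, mem_range, dif_pos (this.1.trans_le hx)]
      omega
  refine Set.Finite.of_finite_image (f := fun x : PU => (x.col, x.word)) ?_ ?_
  · refine ((Set.finite_Iic M).prod (Set.finite_Iic g)).subset ?_
    rintro _ ⟨x, hx, rfl⟩
    exact ⟨hx, hword x hx⟩
  · intro x _ y _ h
    simp only [Prod.mk.injEq] at h
    exact PU.ext h.1 h.2

theorem finite_of_boundedD {B : Set PU} (hB : BoundedD (fun x y => (natDist x y : ℝ)) B) :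
    B.Finite := by
  obtain ⟨C, hC⟩ := hB
  dsimp only at hC
  rcases B.eq_empty_or_nonempty with rfl | ⟨x, hx⟩
  · exact Set.finite_empty
  refine (finite_setOf_col_le (max x.col ⌈C⌉₊)).subset fun y hy => ?_
  have : natDist x y ≤ ⌈C⌉₊ := by exact_mod_cast (hC x hx y hy).trans (Nat.le_ceil C)
  exact (col_le_max_natDist x y).trans (max_le_max le_rfl this)

end PU

/-- Labels of the classes of a sequence of coarsening partitions of `Z`, with `0` labelling a
distinguished class at every level. -/
structure NestedLabeling (Z : Type*) where
  label : ℕ → Z → ℕ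
  label_eq_mono : ∀ ⦃n m : ℕ⦄ ⦃x y : Z⦄, n ≤ m → label n x = label n y → label m x = label m y
  label_eq_zero_mono : ∀ ⦃n m : ℕ⦄ ⦃x : Z⦄, n ≤ m → label n x = 0 → label m x = 0
  exists_label_eq_zero : ∀ x, ∃ n, label n x = 0
  finite_label_image : ∀ n r, (label r '' {y | label n y = 0}).Finite

namespace NestedLabeling

variable {Z : Type*} (L : NestedLabeling Z) {n r : ℕ} {x y : Z}

open Classical in
noncomputable def height (x : Z) : ℕ := Nat.find (L.exists_label_eq_zero x)

theorem label_eq_zero_iff : L.label n x = 0 ↔ L.height x ≤ n :=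
  ⟨fun h => Nat.find_le h,
    fun h => L.label_eq_zero_mono h (Nat.find_spec (L.exists_label_eq_zero x))⟩

theorem lt_height_of_label_ne_zero (h : L.label r x ≠ 0) : r < L.height x :=
  not_le.1 fun hle => h (L.label_eq_zero_iff.2 hle)

theorem height_le_max_of_label_eq (h : L.label n x = L.label n y) :
    L.height x ≤ max (L.height y) n := by
  rw [← label_eq_zero_iff, L.label_eq_mono (le_max_right _ _) h, label_eq_zero_iff]
  exact le_max_left _ _

noncomputable def bound (n : ℕ) : ℕ := sSup (⋃ r < n, L.label r '' {y | L.label n y = 0})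

theorem label_le_bound (hr : r < n) (hy : L.label n y = 0) : L.label r y ≤ L.bound n :=
  le_csSup ((Set.finite_Iio n).biUnion fun r _ => L.finite_label_image n r).bddAbove
    (Set.mem_biUnion hr ⟨y, hy, rfl⟩)

noncomputable def scale (n : ℕ) : ℕ := ∑ k ∈ range (n + 1), (L.bound k + 1)

theorem scale_strictMono : StrictMono L.scale :=
  strictMono_nat_of_lt_succ fun n => by
    rw [scale, scale, sum_range_succ _ (n + 1)]
    omega

theorem label_lt_scale (hr : r < n) (hy : L.label n y = 0) : L.label r y < L.scale n :=
  calc L.label r y < L.bound n + 1 := Nat.lt_succ_of_le (L.label_le_bound hr hy)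
    _ ≤ L.scale n :=
      single_le_sum (f := fun k => L.bound k + 1) (fun _ _ => Nat.zero_le _) (self_mem_range_succ n)

noncomputable def embed (x : Z) : PU where
  col := L.scale (L.height x)
  word := Finsupp.onFinset (range (L.height x)) (fun r => L.label r x)
    fun _ h => mem_range.2 (L.lt_height_of_label_ne_zero h)
  lt_col r h := by
    have hr := L.lt_height_of_label_ne_zero h
    exact ⟨hr.trans_le (L.scale_strictMono.id_le _),
      L.label_lt_scale hr (L.label_eq_zero_iff.2 le_rfl)⟩

@[simp]
theorem embed_col : (L.embed x).col = L.scale (L.height x) := rfl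

@[simp]
theorem embed_word : (L.embed x).word r = L.label r x := rfl

theorem natDist_embed_le (h : L.label n x = L.label n y) :
    PU.natDist (L.embed x) (L.embed y) ≤ L.scale n := by
  have hx := L.height_le_max_of_label_eq h
  have hy := L.height_le_max_of_label_eq h.symm
  unfold PU.natDist
  split_ifs with hcol
  · refine (PU.wordDist_le_iff.2 fun r hr => not_le.1 fun hnr => hr ?_).trans
      (L.scale_strictMono.id_le n)
    simpa using L.label_eq_mono hnr h
  · have hne : L.height x ≠ L.height y := fun e => hcol (by simp [e])
    exact max_le (L.scale_strictMono.monotone (by omega)) (L.scale_strictMono.monotone (by omega))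

theorem label_eq_of_natDist_embed_le (h : PU.natDist (L.embed x) (L.embed y) ≤ n) :
    L.label n x = L.label n y := by
  unfold PU.natDist at h
  split_ifs at h
  · by_contra hne
    exact (PU.wordDist_le_iff.1 h n (by simpa using hne)).false
  · have hle : ∀ z, L.scale (L.height z) ≤ n → L.label n z = 0 := fun z hz =>
      L.label_eq_zero_iff.2 ((L.scale_strictMono.id_le _).trans hz)
    rw [hle x (le_of_max_le_left h), hle y (le_of_max_le_right h)]

theorem coarseEmbD_embed [PseudoMetricSpace Z]
    (hlabel : ∀ R : ℝ, ∃ n, ∀ x y : Z, dist x y ≤ R → L.label n x = L.label n y)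
    (hdist : ∀ n, ∃ S : ℝ, ∀ x y : Z, L.label n x = L.label n y → dist x y ≤ S) :
    CoarseEmbD dist (fun a b => (PU.natDist a b : ℝ)) L.embed := by
  constructor
  · intro R _
    obtain ⟨n, hn⟩ := hlabel R
    refine ⟨L.scale n + 1, by positivity, fun x y hxy => ?_⟩
    dsimp only
    exact_mod_cast (L.natDist_embed_le (hn x y hxy)).trans (Nat.le_add_right _ 1)
  · intro R _
    dsimp only
    obtain ⟨S, hS⟩ := hdist ⌈R⌉₊
    refine ⟨max S 1, by positivity, fun x y hxy => ?_⟩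
    have : PU.natDist (L.embed x) (L.embed y) ≤ ⌈R⌉₊ := by
      exact_mod_cast hxy.trans (Nat.le_ceil R)
    exact (hS x y (L.label_eq_of_natDist_embed_le this)).trans (le_max_left _ _)

end NestedLabeling

theorem chainD_iff_reflTransGen {Y : Type*} {d : Y → Y → ℝ} {r : ℝ} {a b : Y} :
    ChainD d r a b ↔ Relation.ReflTransGen (fun x y => d x y < r) a b := by
  constructor
  · rintro ⟨k, c, rfl, rfl, hc⟩
    induction k with
    | zero => exact .refl
    | succ k ih => exact (ih fun i hi => hc i (by omega)).tail (hc k k.lt_succ_self)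
  · intro h
    induction h with
    | refl => exact ⟨0, fun _ => a, rfl, rfl, fun i hi => absurd hi (Nat.not_lt_zero i)⟩
    | @tail b b' _ hbb' ih =>
      obtain ⟨k, c, hc0, hck, hc⟩ := ih
      refine ⟨k + 1, Function.update c (k + 1) b', by simp [hc0], by simp, fun i hi => ?_⟩
      rcases Nat.lt_succ_iff_lt_or_eq.1 hi with hik | rfl
      · simpa [Function.update_of_ne (by omega : i ≠ k + 1),
          Function.update_of_ne (by omega : i + 1 ≠ k + 1)] using hc i hik
      · simpa [Function.update_of_ne (by omega : i ≠ i + 1), hck] using hbb'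

section Chains

variable {Z : Type*} [PseudoMetricSpace Z] {r s : ℝ} {x y z : Z}

theorem ChainD.of_dist_lt (h : dist x y < r) : ChainD dist r x y :=
  chainD_iff_reflTransGen.2 (.single h)

theorem ChainD.symm (h : ChainD dist r x y) : ChainD dist r y x := by
  rw [chainD_iff_reflTransGen] at h ⊢
  exact Relation.reflTransGen_swap.1 <| Relation.ReflTransGen.mono
    (fun a b (hab : dist a b < r) => (dist_comm b a).trans_lt hab) _ _ h

theorem ChainD.trans (hxy : ChainD dist r x y) (hyz : ChainD dist r y z) : ChainD dist r x z :=
  chainD_iff_reflTransGen.2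
    ((chainD_iff_reflTransGen.1 hxy).trans (chainD_iff_reflTransGen.1 hyz))

theorem ChainD.mono (hrs : r ≤ s) (h : ChainD dist r x y) : ChainD dist s x y :=
  chainD_iff_reflTransGen.2
    (Relation.ReflTransGen.mono (fun _ _ hab => lt_of_lt_of_le hab hrs) _ _
      (chainD_iff_reflTransGen.1 h))

variable [TopologicalSpace.SeparableSpace Z] [Nonempty Z]

open Classical TopologicalSpace

theorem exists_chainD_denseSeq (n : ℕ) (x : Z) : ∃ i, ChainD dist (n + 1) x (denseSeq Z i) := by
  obtain ⟨i, hi⟩ := Metric.denseRange_iff.1 (denseRange_denseSeq Z) x 1 one_pos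
  exact ⟨i, .of_dist_lt (hi.trans_le (by simp))⟩

noncomputable def chainLabel (n : ℕ) (x : Z) : ℕ := Nat.find (exists_chainD_denseSeq n x)

theorem chainD_denseSeq_chainLabel (n : ℕ) (x : Z) :
    ChainD dist (n + 1) x (denseSeq Z (chainLabel n x)) :=
  Nat.find_spec (exists_chainD_denseSeq n x)

theorem chainLabel_eq_iff {n : ℕ} : chainLabel n x = chainLabel n y ↔ ChainD dist (n + 1) x y := by
  constructor
  · intro h
    have hx := chainD_denseSeq_chainLabel n x
    rw [h] at hx
    exact hx.trans (chainD_denseSeq_chainLabel n y).symm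
  · exact fun h => Nat.find_congr' fun {_} => ⟨h.symm.trans, h.trans⟩

theorem chainLabel_eq_zero_iff {n : ℕ} :
    chainLabel n x = 0 ↔ ChainD dist (n + 1) x (denseSeq Z 0) :=
  Nat.find_eq_zero _

theorem isLocallyConstant_chainLabel (n : ℕ) : IsLocallyConstant (chainLabel (Z := Z) n) :=
  (IsLocallyConstant.iff_eventually_eq _).2 fun x => Metric.eventually_nhds_iff.2
    ⟨n + 1, by positivity, fun _ hy => chainLabel_eq_iff.2 (.of_dist_lt hy)⟩

theorem Bornology.IsBounded.finite_chainLabel_image [ProperSpace Z] {A : Set Z}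
    (hA : Bornology.IsBounded A) (n : ℕ) : (chainLabel n '' A).Finite :=
  (hA.isCompact_closure.image (isLocallyConstant_chainLabel n).continuous).finite_of_discrete
    |>.subset (Set.image_mono subset_closure)

noncomputable def chainLabeling [ProperSpace Z] (hZ : AsDimZeroD (dist : Z → Z → ℝ)) :
    NestedLabeling Z where
  label := chainLabel
  label_eq_mono _ _ _ _ hnm h := chainLabel_eq_iff.2 <|
    (chainLabel_eq_iff.1 h).mono (by exact_mod_cast Nat.add_le_add_right hnm 1)
  label_eq_zero_mono _ _ _ hnm h := chainLabel_eq_zero_iff.2 <|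
    (chainLabel_eq_zero_iff.1 h).mono (by exact_mod_cast Nat.add_le_add_right hnm 1)
  exists_label_eq_zero x := ⟨⌈dist x (denseSeq Z 0)⌉₊, chainLabel_eq_zero_iff.2 <|
    .of_dist_lt ((Nat.le_ceil _).trans_lt (lt_add_one _))⟩
  finite_label_image n r := by
    obtain ⟨S, -, hS⟩ := hZ (n + 1) (by positivity)
    refine Bornology.IsBounded.finite_chainLabel_image ?_ r
    refine (Metric.isBounded_closedBall (x := denseSeq Z 0) (r := S)).subset fun y hy => ?_
    exact Metric.mem_closedBall.2 (hS _ _ (chainLabel_eq_zero_iff.1 hy))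

theorem exists_coarseEmbD_pu [ProperSpace Z] (hZ : AsDimZeroD (dist : Z → Z → ℝ)) :
    ∃ e : Z → PU, CoarseEmbD dist (fun a b => (PU.natDist a b : ℝ)) e := by
  refine ⟨(chainLabeling hZ).embed, (chainLabeling hZ).coarseEmbD_embed (fun R => ?_) fun n => ?_⟩
  · refine ⟨⌈R⌉₊, fun x y hxy => chainLabel_eq_iff.2 (.of_dist_lt ?_)⟩
    exact hxy.trans_lt ((Nat.le_ceil R).trans_lt (lt_add_one _))
  · obtain ⟨S, -, hS⟩ := hZ (n + 1) (by positivity)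
    exact ⟨S, fun x y h => hS x y (chainLabel_eq_iff.1 h)⟩

end Chains

theorem properSpace_of_isCompact_closure {Z : Type*} [PseudoMetricSpace Z]
    (h : ∀ B : Set Z, Bornology.IsBounded B → IsCompact (closure B)) : ProperSpace Z :=
  ⟨fun x r => by
    simpa only [Metric.isClosed_closedBall.closure_eq] using
      h (Metric.closedBall x r) Metric.isBounded_closedBall⟩

theorem coarseEmbD_of_isEmpty {X Y : Type*} [IsEmpty X] (dX : X → X → ℝ) (dY : Y → Y → ℝ)
    (f : X → Y) : CoarseEmbD dX dY f :=
  ⟨fun _ _ => ⟨1, one_pos, isEmptyElim⟩, fun _ _ => ⟨1, one_pos, isEmptyElim⟩⟩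

/-- There is a countable integral ultrametric space `PU` with all bounded
subsets finite into which every proper metric space of asymptotic dimension 0 coarsely
embeds. -/
theorem universal_space_proper_asdim_zero :
    ∃ (PU : Type) (dP : PU → PU → ℝ), Countable PU ∧ IsMetricD dP ∧ IsUltraD dP ∧
      (∀ a b : PU, ∃ n : ℕ, dP a b = (n : ℝ)) ∧
      (∀ B : Set PU, BoundedD dP B → B.Finite) ∧
      ∀ (Z : Type u) [MetricSpace Z],
        (∀ B : Set Z, Bornology.IsBounded B → IsCompact (closure B)) →
        AsDimZeroD (dist : Z → Z → ℝ) →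
        ∃ e : Z → PU, CoarseEmbD (dist : Z → Z → ℝ) dP e := by
  refine ⟨PU, fun a b => (PU.natDist a b : ℝ), inferInstance, PU.isMetricD_natDist,
    PU.isUltraD_natDist, fun a b => ⟨_, rfl⟩, fun _ => PU.finite_of_boundedD, ?_⟩
  intro Z _ hproper hZ
  have := properSpace_of_isCompact_closure hproper
  rcases isEmpty_or_nonempty Z with _ | _
  · exact ⟨isEmptyElim, coarseEmbD_of_isEmpty _ _ _⟩
  · exact exists_coarseEmbD_pu hZ
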